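/- arXiv:1607.07339 — 4 statements merged into one kernel-verified Lean document; each statement's English description precedes it below -/
import Mathlib

section
/- For any n ≥ 1, any 1 ≤ k ≤ n, and any positive integers a_1,...,a_n, one has (a_k+1)/2 ≤ q_n(a_1,...,a_n) / q_{n-1}(a_1,...,a_{k-1}, a_{k+1},...,a_n) ≤ a_k + 1, where q_m denotes the denominator of the finite continued fraction [b_1,...,b_m]. -/
open MeasureTheory Filter Set

/-- The Gauss map `T(x) = 1/x - ⌊1/x⌋` (with `T 0 = 0`). -/
noncomputable def gaussMap (x : ℝ) : ℝ := if x = 0 then 0 else 1/x - ⌊1/x⌋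

/-- `pquot x n` is the `(n+1)`-st partial quotient `a_{n+1}(x) = ⌊1 / T^n x⌋`. -/
noncomputable def pquot (x : ℝ) (n : ℕ) : ℕ := (⌊1 / (gaussMap^[n] x)⌋).toNat

/-- One step of the continuant recursion `q_{j+1} = b_{j+1} q_j + q_{j-1}`. -/
def cdStep (p : ℕ × ℕ) (b : ℕ) : ℕ × ℕ := (b * p.1 + p.2, p.1)

/-- Denominator `q_n(b_1,…,b_n)` of the finite continued fraction `[b_1,…,b_n]`. -/
def contDenom (w : List ℕ) : ℕ := (w.foldl cdStep (1, 0)).1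

/-- Numerator `p_n(b_1,…,b_n)` of the finite continued fraction `[b_1,…,b_n]`. -/
def contNum (w : List ℕ) : ℕ := (w.foldl cdStep (0, 1)).1

/-- The continued fraction cylinder `I(w) = {x ∈ [0,1) : a_i(x) = w_i, 1 ≤ i ≤ |w|}`. -/
def cyl (w : List ℕ) : Set ℝ :=
  {x | x ∈ Set.Ico (0:ℝ) 1 ∧ ∀ i < w.length, pquot x i = w.getD i 0}

open scoped Classical in
/-- The metric `d(x,y) = 2^{-inf{j ≥ 0 : x_{j+1} ≠ y_{j+1}}}` on `ℕ^ℕ` (0-indexed). -/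
noncomputable def dseq (x y : ℕ → ℕ) : ℝ :=
  if h : ∃ j, x j ≠ y j then (2:ℝ)⁻¹ ^ (Nat.find h) else 0

/-- The one-sided shift on `ℕ^ℕ`. -/
def shift (x : ℕ → ℕ) : ℕ → ℕ := fun n => x (n+1)

/-- The symbolic space `Σ_N = {1,…,N}^ℕ` inside `ℕ^ℕ`. -/
def SigmaN (N : ℕ) : Set (ℕ → ℕ) := {x | ∀ i, 1 ≤ x i ∧ x i ≤ N}

/-- `g_N(x) = (N, 1, x_1, 1,1, x_1,x_2, 1,1,1, x_1,x_2,x_3, …)` (0-indexed). -/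
def gN (N : ℕ) (x : ℕ → ℕ) : ℕ → ℕ := fun n =>
  if n = 0 then N else
    let j := n - 1
    let k := (Nat.sqrt (4*j+1) + 1) / 2
    let o := j - k*(k-1)
    if o < k then 1 else x (o - k)

/-- `Θ_N(x) = (x_1, x_1,x_2, x_1,x_2,x_3, …)` (0-indexed). -/
def thetaN (x : ℕ → ℕ) : ℕ → ℕ := fun j =>
  let k := (Nat.sqrt (8*j+1) + 1) / 2
  x (j - k*(k-1)/2)

/-- The index set `R = ∪_m {m³ + t : 1 ≤ t ≤ m}`. -/
def inR (n : ℕ) : Prop := ∃ m, 1 ≤ m ∧ m^3 + 1 ≤ n ∧ n ≤ m^3 + m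

instance : DecidablePred inR := fun n =>
  decidable_of_iff (∃ m ∈ Finset.Icc 1 n, m^3 + 1 ≤ n ∧ n ≤ m^3 + m) (by
    constructor
    · rintro ⟨m, hm, h⟩; exact ⟨m, (Finset.mem_Icc.mp hm).1, h⟩
    · rintro ⟨m, h1, h2, h3⟩
      refine ⟨m, Finset.mem_Icc.mpr ⟨h1, ?_⟩, h2, h3⟩
      have : m ≤ m^3 := Nat.le_self_pow (by norm_num) m
      omega)

/-- `t(n) = #{k ≥ 1 : r_k ≤ n}`, the number of elements of `R` at most `n`. -/
def tcount (n : ℕ) : ℕ := ((Finset.Icc 1 n).filter inR).card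

/-- `Ψ_N(x,y)`: put `y_k` at position `r_k ∈ R` and fill the other
positions with the entries of `x` in order (positions are 1-indexed `i+1`). -/
def psiN (x y : ℕ → ℕ) : ℕ → ℕ := fun i =>
  let n := i + 1
  if inR n then y (tcount n - 1) else x (n - tcount n - 1)

/-- `Δ_N(x) = Ψ_N(x, Θ_N(g_N(x)))`. -/
def deltaN (N : ℕ) (x : ℕ → ℕ) : ℕ → ℕ := psiN x (thetaN (gN N x))

/-- The value `[a_1, a_2, …]` of an infinite continued fraction, as the limit
of its convergents `p_n/q_n`. -/
noncomputable def cfVal (a : ℕ → ℕ) : ℝ :=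
  limUnder atTop fun n => (contNum (List.ofFn fun i : Fin n => a i) : ℝ) /
    (contDenom (List.ofFn fun i : Fin n => a i) : ℝ)

/-- The orbit of `x` under the Gauss map is dense in `[0,1]`. -/
def gaussOrbitDense (x : ℝ) : Prop :=
  Set.Icc (0:ℝ) 1 ⊆ closure (Set.range fun n => gaussMap^[n] x)

/-- The set `D` of points of `[0,1)` with dense Gauss orbit. -/
def Dset : Set ℝ := {x ∈ Set.Ico (0:ℝ) 1 | gaussOrbitDense x}

/-- The set `D^c` of points of `[0,1)` with non-dense Gauss orbit. -/
def Dcset : Set ℝ := {x ∈ Set.Ico (0:ℝ) 1 | ¬ gaussOrbitDense x}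

/-!
The continuant recursion is linear in its initial pair. With `(A, B)` the state after `u`, and
`C`, `D` the first coordinates of the fold of `v` started at `(1, 0)` and `(0, 1)`, this gives
`q(u ++ a :: v) = (a A + B) C + A D` and `q(u ++ v) = A C + B D`, where `0 ≤ B ≤ A` and
`0 ≤ D ≤ C`. The upper bound `a + 1` is then `(A - B) (C - D) ≥ 0`, and the lower bound
`(a + 1) / 2` follows from `B D ≤ A C` and `B D ≤ A D`.
-/

theorem foldl_cdStep_eq_smul_add (w : List ℕ) (p q : ℕ) :
    w.foldl cdStep (p, q) = p • w.foldl cdStep (1, 0) + q • w.foldl cdStep (0, 1) := by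
  induction w generalizing p q with
  | nil => simp
  | cons b t ih =>
    simp only [List.foldl_cons, cdStep, ih (b * p + q) p, ih (b * 1 + 0) 1, ih (b * 0 + 1) 0]
    ext <;> simp only [Prod.fst_add, Prod.snd_add, Prod.smul_fst, Prod.smul_snd, smul_eq_mul] <;>
      ring

theorem foldl_cdStep_snd_le_fst (w : List ℕ) (hw : ∀ a ∈ w, 1 ≤ a) (p : ℕ × ℕ)
    (hp : p.2 ≤ p.1) :
    p.1 ≤ (w.foldl cdStep p).1 ∧ (w.foldl cdStep p).2 ≤ (w.foldl cdStep p).1 := by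
  induction w generalizing p with
  | nil => exact ⟨le_rfl, hp⟩
  | cons b t ih =>
    have hb : 1 ≤ b := hw b List.mem_cons_self
    have hstep : p.1 ≤ b * p.1 + p.2 := le_add_right (Nat.le_mul_of_pos_left _ hb)
    obtain ⟨hmono, hinv⟩ := ih (fun a ha => hw a (List.mem_cons_of_mem b ha)) (cdStep p b) hstep
    exact ⟨hstep.trans hmono, hinv⟩

theorem foldl_cdStep_zero_one_le (v : List ℕ) (hv : ∀ a ∈ v, 1 ≤ a) :
    (v.foldl cdStep (0, 1)).1 ≤ (v.foldl cdStep (1, 0)).1 := by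
  cases v with
  | nil => simp
  | cons b t =>
    have hb : 1 ≤ b := hv b List.mem_cons_self
    simp only [List.foldl_cons, cdStep, foldl_cdStep_eq_smul_add t (b * 1 + 0) 1,
      foldl_cdStep_eq_smul_add t (b * 0 + 1) 0]
    simp only [Prod.fst_add, Prod.smul_fst, smul_eq_mul]
    nlinarith

theorem one_le_contDenom (w : List ℕ) (hw : ∀ a ∈ w, 1 ≤ a) : 1 ≤ contDenom w :=
  (foldl_cdStep_snd_le_fst w hw (1, 0) zero_le_one).1

theorem div_bounds_of_continuant_split {A B C D a : ℝ} (hB : 0 ≤ B) (hBA : B ≤ A) (hD : 0 ≤ D)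
    (hDC : D ≤ C) (hAC : 0 < A * C) (ha : 1 ≤ a) :
    (a + 1) / 2 ≤ ((a * A + B) * C + A * D) / (A * C + B * D) ∧
      ((a * A + B) * C + A * D) / (A * C + B * D) ≤ a + 1 := by
  have hden : 0 < A * C + B * D := by positivity
  have hcross : 0 ≤ (A - B) * (C - D) := mul_nonneg (sub_nonneg.2 hBA) (sub_nonneg.2 hDC)
  have hBD_AC : B * D ≤ A * C := mul_le_mul hBA hDC hD (hB.trans hBA)
  have hBD_AD : B * D ≤ A * D := mul_le_mul_of_nonneg_right hBA hD
  constructor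
  · rw [div_le_div_iff₀ two_pos hden]
    nlinarith [mul_le_mul_of_nonneg_left hBD_AC (sub_nonneg.2 ha), mul_nonneg hB (hD.trans hDC)]
  · rw [div_le_iff₀ hden]
    nlinarith [mul_nonneg (zero_le_one.trans ha) (mul_nonneg hB hD)]

theorem contDenom_append_cons_div_bounds (u v : List ℕ) (a : ℕ) (ha : 1 ≤ a)
    (hu : ∀ x ∈ u, 1 ≤ x) (hv : ∀ x ∈ v, 1 ≤ x) :
    ((a : ℝ) + 1) / 2 ≤ (contDenom (u ++ a :: v) : ℝ) / (contDenom (u ++ v) : ℝ) ∧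
      (contDenom (u ++ a :: v) : ℝ) / (contDenom (u ++ v) : ℝ) ≤ (a : ℝ) + 1 := by
  obtain ⟨⟨A, B⟩, hAB⟩ : ∃ p, u.foldl cdStep (1, 0) = p := ⟨_, rfl⟩
  set C := (v.foldl cdStep (1, 0)).1
  set D := (v.foldl cdStep (0, 1)).1
  have hBA : B ≤ A := by simpa [hAB] using (foldl_cdStep_snd_le_fst u hu (1, 0) zero_le_one).2
  have hA : 1 ≤ A := by simpa [contDenom, hAB] using one_le_contDenom u hu
  have hC : 1 ≤ C := one_le_contDenom v hv
  have hDC : D ≤ C := foldl_cdStep_zero_one_le v hv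
  have hsplit : contDenom (u ++ a :: v) = (a * A + B) * C + A * D := by
    rw [contDenom, List.foldl_append, hAB, List.foldl_cons, cdStep, foldl_cdStep_eq_smul_add v]
    rfl
  have herase : contDenom (u ++ v) = A * C + B * D := by
    rw [contDenom, List.foldl_append, hAB, foldl_cdStep_eq_smul_add v]
    rfl
  rw [hsplit, herase]
  push_cast
  exact div_bounds_of_continuant_split (Nat.cast_nonneg B) (by exact_mod_cast hBA)
    (Nat.cast_nonneg D) (by exact_mod_cast hDC)
    (mul_pos (by exact_mod_cast hA) (by exact_mod_cast hC)) (by exact_mod_cast ha)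

theorem contDenom_erase_ratio_general (k : ℕ)
    (w : List ℕ) (hpos : ∀ a ∈ w, 1 ≤ a) :
    ((w.getD (k-1) 0 : ℝ) + 1) / 2 ≤
      (contDenom w : ℝ) / (contDenom (w.eraseIdx (k-1)) : ℝ) ∧
    (contDenom w : ℝ) / (contDenom (w.eraseIdx (k-1)) : ℝ) ≤ (w.getD (k-1) 0 : ℝ) + 1 := by
  set i := k - 1
  by_cases hi : i < w.length
  · have hw : w = w.take i ++ w[i] :: w.drop (i + 1) := by
      rw [← List.drop_eq_getElem_cons hi, List.take_append_drop]
    have hbounds := contDenom_append_cons_div_bounds (w.take i) (w.drop (i + 1)) w[i]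
      (hpos _ (List.getElem_mem hi)) (fun x hx => hpos x (List.mem_of_mem_take hx))
      (fun x hx => hpos x (List.mem_of_mem_drop hx))
    rwa [← hw, ← List.eraseIdx_eq_take_drop_succ, ← List.getD_eq_getElem w 0 hi] at hbounds
  · -- out of range, `getD` returns `0` and `eraseIdx` does nothing
    push Not at hi
    have hq : (0 : ℝ) < contDenom w := by exact_mod_cast one_le_contDenom w hpos
    rw [List.getD_eq_default w 0 hi, List.eraseIdx_of_length_le hi, div_self hq.ne']
    norm_num

/-- `(a_k+1)/2 ≤ q_n(a_1,…,a_n) / q_{n-1}(a_1,…,a_{k-1},a_{k+1},…,a_n) ≤ a_k+1`. -/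
theorem contDenom_erase_ratio (n k : ℕ) (hn : 1 ≤ n) (hk1 : 1 ≤ k) (hkn : k ≤ n)
    (w : List ℕ) (hlen : w.length = n) (hpos : ∀ a ∈ w, 1 ≤ a) :
    ((w.getD (k-1) 0 : ℝ) + 1) / 2 ≤
      (contDenom w : ℝ) / (contDenom (w.eraseIdx (k-1)) : ℝ) ∧
    (contDenom w : ℝ) / (contDenom (w.eraseIdx (k-1)) : ℝ) ≤ (w.getD (k-1) 0 : ℝ) + 1 :=
  contDenom_erase_ratio_general k w hpos
end

section
/- The set D^c of points x ∈ [0,1) whose orbit under the Gauss map is not dense in [0,1] is a set of the first category (meager) in [0,1]. -/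
open MeasureTheory Filter Set

/-!
A non-dense orbit misses some basic open set `U` meeting `(0,1)`, and rationals form a meagre set,
so it suffices that the irrationals whose orbit avoids such a `U` form a nowhere dense set. Fix an
irrational `z ∈ U`. Near any irrational `y`, prefixing the first `m` continued fraction digits of
`y` to those of `z` gives an irrational `x` with `T^m x = z`; as `T^m` is continuous at irrationals,
a whole neighbourhood of `x` enters `U`. The point `x` is close to `y` because the inverse branches
`t ↦ 1/(a+t)` of `T` contract by a factor `4` over any two steps.
-/

lemma isNowhereDense_of_subset_closure_interior_compl {X : Type*} [TopologicalSpace X]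
    {s : Set X} (h : s ⊆ closure (interior sᶜ)) : IsNowhereDense s := by
  have hs : s ⊆ frontier (interior sᶜ) := by
    rw [isOpen_interior.frontier_eq]
    exact fun x hx => ⟨h hx, fun hx' => interior_subset hx' hx⟩
  refine IsNowhereDense.mono hs ?_
  rw [isClosed_frontier.isNowhereDense_iff, ← frontier_compl]
  exact interior_frontier isOpen_interior.isClosed_compl

lemma gaussMap_eq_fract {x : ℝ} (hx : x ≠ 0) : gaussMap x = Int.fract x⁻¹ := by
  rw [gaussMap, if_neg hx, Int.fract, one_div]

lemma irrational_gaussMap {x : ℝ} (hx : Irrational x) : Irrational (gaussMap x) := by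
  rw [gaussMap_eq_fract hx.ne_zero, Int.fract]
  exact hx.inv.sub_intCast _

lemma irrational_gaussMap_iterate {x : ℝ} (hx : Irrational x) (n : ℕ) :
    Irrational (gaussMap^[n] x) := by
  induction n with
  | zero => exact hx
  | succ n ih => rw [Function.iterate_succ_apply']; exact irrational_gaussMap ih

lemma gaussMap_mem_Ioo {x : ℝ} (hx : Irrational x) : gaussMap x ∈ Ioo 0 1 := by
  have hne := (irrational_gaussMap hx).ne_zero
  rw [gaussMap_eq_fract hx.ne_zero] at hne ⊢
  exact ⟨(Int.fract_nonneg _).lt_of_ne' hne, Int.fract_lt_one _⟩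

lemma gaussMap_iterate_mem_Ioo {x : ℝ} (hx : x ∈ Ioo 0 1) (hirr : Irrational x) :
    ∀ n, gaussMap^[n] x ∈ Ioo 0 1
  | 0 => hx
  | n + 1 => by
    rw [Function.iterate_succ_apply']
    exact gaussMap_mem_Ioo (irrational_gaussMap_iterate hirr n)

lemma continuousAt_gaussMap {x : ℝ} (hx : Irrational x) : ContinuousAt gaussMap x := by
  have hfract : ContinuousAt (fun y : ℝ => Int.fract y⁻¹) x :=
    (continuousAt_fract (hx.inv.ne_int _)).comp (continuousAt_inv₀ hx.ne_zero)
  refine hfract.congr ?_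
  filter_upwards [eventually_ne_nhds hx.ne_zero] with y hy
  rw [gaussMap_eq_fract hy]

lemma continuousAt_gaussMap_iterate {x : ℝ} (hx : Irrational x) (n : ℕ) :
    ContinuousAt gaussMap^[n] x := by
  induction n with
  | zero => exact continuousAt_id
  | succ n ih =>
    rw [Function.iterate_succ']
    exact (continuousAt_gaussMap (irrational_gaussMap_iterate hx n)).comp ih

lemma one_le_pquot {x : ℝ} (hx : x ∈ Ioo 0 1) (hirr : Irrational x) (n : ℕ) :
    1 ≤ pquot x n := by
  obtain ⟨h0, h1⟩ := gaussMap_iterate_mem_Ioo hx hirr n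
  have : (1 : ℤ) ≤ ⌊1 / gaussMap^[n] x⌋ :=
    Int.le_floor.mpr (by rw [Int.cast_one, le_div_iff₀ h0]; linarith)
  unfold pquot
  omega

lemma pquot_succ (x : ℝ) (n : ℕ) : pquot x (n + 1) = pquot (gaussMap x) n := rfl

lemma inv_pquot_add_gaussMap {x : ℝ} (hx : x ∈ Ioo 0 1) :
    ((pquot x 0 : ℝ) + gaussMap x)⁻¹ = x := by
  have hfloor : 0 ≤ ⌊1 / x⌋ := Int.floor_nonneg.mpr (by have := hx.1; positivity)
  have hcast : (pquot x 0 : ℝ) = ⌊1 / x⌋ := by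
    rw [pquot, Function.iterate_zero_apply, ← Int.cast_natCast, Int.toNat_of_nonneg hfloor]
  rw [hcast, gaussMap, if_neg hx.1.ne', add_sub_cancel, one_div, inv_inv]

lemma gaussMap_inv_natCast_add {a : ℕ} (ha : 1 ≤ a) {t : ℝ} (ht : t ∈ Ico 0 1) :
    gaussMap ((a + t)⁻¹) = t := by
  have hpos : (0 : ℝ) < a + t := by
    have : (1 : ℝ) ≤ a := by exact_mod_cast ha
    linarith [ht.1]
  rw [gaussMap_eq_fract (inv_ne_zero hpos.ne'), inv_inv, Int.fract_natCast_add,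
    Int.fract_eq_self]
  exact ht

lemma inv_natCast_add_mem_Ioo {a : ℕ} (ha : 1 ≤ a) {t : ℝ} (ht : t ∈ Ioo 0 1) :
    ((a : ℝ) + t)⁻¹ ∈ Ioo 0 1 := by
  have : (1 : ℝ) ≤ a := by exact_mod_cast ha
  exact ⟨by have := ht.1; positivity, inv_lt_one_of_one_lt₀ (by linarith [ht.1])⟩

/-- `1 / (a₁ + 1 / (⋯ + 1 / (aₙ + t)))`, whose continued fraction digits are `a₁, …, aₙ` followed by
those of `t`. -/
noncomputable def prependDigits (w : List ℕ) (t : ℝ) : ℝ :=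
  w.foldr (fun a s => ((a : ℝ) + s)⁻¹) t

@[simp] lemma prependDigits_nil (t : ℝ) : prependDigits [] t = t := rfl

@[simp] lemma prependDigits_cons (a : ℕ) (w : List ℕ) (t : ℝ) :
    prependDigits (a :: w) t = ((a : ℝ) + prependDigits w t)⁻¹ := rfl

lemma prependDigits_mem_Ioo {w : List ℕ} (hw : ∀ a ∈ w, 1 ≤ a) {t : ℝ} (ht : t ∈ Ioo 0 1) :
    prependDigits w t ∈ Ioo 0 1 := by
  induction w with
  | nil => exact ht
  | cons a w ih =>
    exact inv_natCast_add_mem_Ioo (hw a (by simp)) (ih fun b hb => hw b (by simp [hb]))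

lemma irrational_prependDigits (w : List ℕ) {t : ℝ} (ht : Irrational t) :
    Irrational (prependDigits w t) := by
  induction w with
  | nil => exact ht
  | cons a w ih => exact (ih.natCast_add a).inv

lemma gaussMap_iterate_prependDigits {w : List ℕ} (hw : ∀ a ∈ w, 1 ≤ a) {t : ℝ}
    (ht : t ∈ Ioo 0 1) : gaussMap^[w.length] (prependDigits w t) = t := by
  induction w with
  | nil => rfl
  | cons a w ih =>
    have hw' : ∀ b ∈ w, 1 ≤ b := fun b hb => hw b (by simp [hb])
    have hmem := Ioo_subset_Ico_self (prependDigits_mem_Ioo hw' ht)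
    rw [List.length_cons, Function.iterate_succ_apply, prependDigits_cons,
      gaussMap_inv_natCast_add (hw a (by simp)) hmem]
    exact ih hw'

lemma prependDigits_pquot_gaussMap_iterate {y : ℝ} (hy : y ∈ Ioo 0 1) (hirr : Irrational y)
    (m : ℕ) : prependDigits (List.ofFn fun i : Fin m => pquot y i) (gaussMap^[m] y) = y := by
  induction m generalizing y with
  | zero => rfl
  | succ m ih =>
    rw [List.ofFn_succ, prependDigits_cons]
    simp only [Fin.val_zero, Fin.val_succ, pquot_succ]
    rw [Function.iterate_succ_apply, ih (gaussMap_mem_Ioo hirr) (irrational_gaussMap hirr)]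
    exact inv_pquot_add_gaussMap hy

/-- A single branch `t ↦ 1/(1+t)` does not contract near `0`, but any two consecutive ones do. -/
lemma abs_inv_add_inv_add_sub_le {a b : ℕ} (ha : 1 ≤ a) (hb : 1 ≤ b) {u v : ℝ}
    (hu : 0 ≤ u) (hv : 0 ≤ v) :
    |((a : ℝ) + ((b : ℝ) + u)⁻¹)⁻¹ - ((a : ℝ) + ((b : ℝ) + v)⁻¹)⁻¹| ≤ |u - v| / 4 := by
  have ha' : (1 : ℝ) ≤ a := by exact_mod_cast ha
  have hb' : (1 : ℝ) ≤ b := by exact_mod_cast hb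
  have hA : (2 : ℝ) ≤ a * (b + u) + 1 := by nlinarith
  have hB : (2 : ℝ) ≤ a * (b + v) + 1 := by nlinarith
  have hdiff : ((a : ℝ) + ((b : ℝ) + u)⁻¹)⁻¹ - ((a : ℝ) + ((b : ℝ) + v)⁻¹)⁻¹ =
      (u - v) / ((a * (b + u) + 1) * (a * (b + v) + 1)) := by
    have : (b : ℝ) + u ≠ 0 := by positivity
    have : (b : ℝ) + v ≠ 0 := by positivity
    field_simp
    ring
  have hD : (4 : ℝ) ≤ (a * (b + u) + 1) * (a * (b + v) + 1) := by nlinarith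
  rw [hdiff, abs_div, abs_of_pos (by linarith : (0 : ℝ) < _ * _)]
  exact div_le_div_of_nonneg_left (abs_nonneg _) (by norm_num) hD

lemma abs_prependDigits_sub_le :
    ∀ {w : List ℕ}, (∀ a ∈ w, 1 ≤ a) → ∀ {s t : ℝ}, s ∈ Ioo 0 1 → t ∈ Ioo 0 1 →
      |prependDigits w s - prependDigits w t| ≤ 4⁻¹ ^ (w.length / 2)
  | [], _, _, _, hs, ht => by
    simpa using (abs_sub_lt_of_nonneg_of_lt hs.1.le hs.2 ht.1.le ht.2).le
  | [a], hw, _, _, hs, ht => by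
    have hs' := prependDigits_mem_Ioo hw hs
    have ht' := prependDigits_mem_Ioo hw ht
    simpa using (abs_sub_lt_of_nonneg_of_lt hs'.1.le hs'.2 ht'.1.le ht'.2).le
  | a :: b :: w, hw, s, t, hs, ht => by
    have hw' : ∀ c ∈ w, 1 ≤ c := fun c hc => hw c (by simp [hc])
    calc |prependDigits (a :: b :: w) s - prependDigits (a :: b :: w) t|
        ≤ |prependDigits w s - prependDigits w t| / 4 :=
          abs_inv_add_inv_add_sub_le (hw a (by simp)) (hw b (by simp))
            (prependDigits_mem_Ioo hw' hs).1.le (prependDigits_mem_Ioo hw' ht).1.le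
      _ ≤ 4⁻¹ ^ (w.length / 2) / 4 := by gcongr; exact abs_prependDigits_sub_le hw' hs ht
      _ = 4⁻¹ ^ ((a :: b :: w).length / 2) := by
        rw [show (a :: b :: w).length / 2 = w.length / 2 + 1 by simp; omega, pow_succ,
          div_eq_mul_inv]

lemma mem_closure_setOf_gaussMap_iterate_eq {y z : ℝ} (hy : y ∈ Ioo 0 1) (hyirr : Irrational y)
    (hz : z ∈ Ioo 0 1) (hzirr : Irrational z) :
    y ∈ closure {x | Irrational x ∧ ∃ m, gaussMap^[m] x = z} := by
  rw [Metric.mem_closure_iff]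
  intro ε hε
  obtain ⟨k, hk⟩ := exists_pow_lt_of_lt_one hε (by norm_num : (4 : ℝ)⁻¹ < 1)
  set w := List.ofFn fun i : Fin (2 * k) => pquot y i
  have hw : ∀ a ∈ w, 1 ≤ a := by
    simp only [w, List.mem_ofFn]
    rintro _ ⟨i, rfl⟩
    exact one_le_pquot hy hyirr i
  have hlen : w.length = 2 * k := List.length_ofFn
  refine ⟨prependDigits w z, ⟨irrational_prependDigits w hzirr, w.length,
    gaussMap_iterate_prependDigits hw hz⟩, ?_⟩
  calc dist y (prependDigits w z)
      = |prependDigits w (gaussMap^[2 * k] y) - prependDigits w z| := by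
        rw [prependDigits_pquot_gaussMap_iterate hy hyirr, Real.dist_eq]
    _ ≤ 4⁻¹ ^ (w.length / 2) :=
        abs_prependDigits_sub_le hw (gaussMap_iterate_mem_Ioo hy hyirr _) hz
    _ < ε := by rwa [hlen, Nat.mul_div_cancel_left _ two_pos]

def avoidingSet (U : Set ℝ) : Set ℝ :=
  {x | x ∈ Ioo 0 1 ∧ Irrational x ∧ ∀ n, gaussMap^[n] x ∉ U}

lemma isNowhereDense_avoidingSet {U : Set ℝ} (hU : IsOpen U) (hne : (U ∩ Ioo 0 1).Nonempty) :
    IsNowhereDense (avoidingSet U) := by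
  obtain ⟨z, ⟨hzU, hz⟩, hzirr⟩ := dense_irrational.inter_open_nonempty _ (hU.inter isOpen_Ioo) hne
  refine isNowhereDense_of_subset_closure_interior_compl fun y ⟨hy, hyirr, _⟩ => ?_
  refine closure_mono ?_ (mem_closure_setOf_gaussMap_iterate_eq hy hyirr hz hzirr)
  rintro x ⟨hxirr, m, rfl⟩
  rw [mem_interior_iff_mem_nhds]
  filter_upwards [continuousAt_gaussMap_iterate hxirr m (hU.mem_nhds hzU)] with x' hx' hA
  exact hA.2.2 m hx'

lemma Dcset_subset_union_avoidingSet {B : Set (Set ℝ)}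
    (hB : TopologicalSpace.IsTopologicalBasis B) :
    Dcset ⊆ {x | ¬Irrational x} ∪ ⋃ U ∈ {U ∈ B | (U ∩ Ioo 0 1).Nonempty}, avoidingSet U := by
  rintro x ⟨hx, hnd⟩
  by_cases hirr : Irrational x
  · obtain ⟨c, hc, hcx⟩ := not_subset.mp hnd
    obtain ⟨U, hUB, hcU, hUx⟩ := hB.exists_subset_of_mem_open hcx isClosed_closure.isOpen_compl
    have hc' : c ∈ closure (Ioo (0 : ℝ) 1) := by rwa [closure_Ioo zero_ne_one]
    refine Or.inr (mem_biUnion ⟨hUB, mem_closure_iff.mp hc' U (hB.isOpen hUB) hcU⟩ ?_)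
    exact ⟨⟨hx.1.lt_of_ne hirr.ne_zero.symm, hx.2⟩, hirr,
      fun n hn => hUx hn (subset_closure ⟨n, rfl⟩)⟩
  · exact Or.inl hirr

/-- The set of points of `[0,1)` with non-dense Gauss orbit is meager. -/
theorem Dcset_meagre : IsMeagre Dcset := by
  obtain ⟨B, hBc, -, hB⟩ := TopologicalSpace.exists_countable_basis ℝ
  refine IsMeagre.mono (Dcset_subset_union_avoidingSet hB) (IsMeagre.union ?_ ?_)
  · exact mem_of_superset eventually_residual_irrational fun x hx hnx => hnx hx
  · exact isMeagre_biUnion (hBc.mono (sep_subset _ _))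
      fun U hU => (isNowhereDense_avoidingSet (hB.isOpen hU.1) hU.2).isMeagre
end

section
/- Let Σ_N = {1,...,N}^ℕ with metric d(x,y) = 2^{-i} where i = inf{j ≥ 0 : x_{j+1} ≠ y_{j+1}}. The map Δ_N : Σ_N → Σ_N constructed by interleaving x with Θ_N(g_N(x)) along the index set R = ∪_m {m^3 + t : 1 ≤ t ≤ m} is continuous and injective. -/
open MeasureTheory Filter Set

/-!
Injectivity: the positions outside `R` carry `x_1, x_2, …` in order, and every index of `x` is
reached, because `R` misses each cube `(m+1)³`. Continuity: the entry of `Δ_N(x)` at position `n`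
only depends on `x_1, …, x_n`, so `Δ_N` does not increase the distance `d`.
-/

lemma tcount_le (n : ℕ) : tcount n ≤ n := by
  calc tcount n ≤ (Finset.Icc 1 n).card := Finset.card_filter_le _ _
    _ = n := by simp

lemma tcount_succ (n : ℕ) :
    tcount (n + 1) = tcount n + if inR (n + 1) then 1 else 0 := by
  unfold tcount
  rw [← Finset.insert_Icc_right_eq_Icc_add_one (by omega), Finset.filter_insert]
  split_ifs
  · rw [Finset.card_insert_of_notMem (by simp)]
  · rfl

lemma tcount_pos_of_inR {n : ℕ} (h : inR n) : 0 < tcount n := by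
  have hn : 1 ≤ n := by
    obtain ⟨m, hm, hlo, -⟩ := h
    have : 1 ≤ m ^ 3 := Nat.one_le_pow _ _ hm
    omega
  exact Finset.card_pos.mpr ⟨n, Finset.mem_filter.mpr ⟨Finset.mem_Icc.mpr ⟨hn, le_rfl⟩, h⟩⟩

lemma not_inR_succ_cube (m : ℕ) : ¬ inR ((m + 1) ^ 3) := by
  rintro ⟨k, -, hlo, hhi⟩
  have hkm : k < m + 1 := by
    by_contra! h
    have : (m + 1) ^ 3 ≤ k ^ 3 := Nat.pow_le_pow_left h 3
    omega
  have : (k + 1) ^ 3 ≤ (m + 1) ^ 3 := Nat.pow_le_pow_left hkm 3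
  nlinarith

def nonRCount (n : ℕ) : ℕ := n - tcount n

lemma nonRCount_succ (n : ℕ) :
    nonRCount (n + 1) = nonRCount n + if inR (n + 1) then 0 else 1 := by
  have := tcount_le n
  unfold nonRCount
  rw [tcount_succ]
  split_ifs <;> omega

lemma nonRCount_monotone : Monotone nonRCount :=
  monotone_nat_of_le_succ fun n => by rw [nonRCount_succ]; omega

lemma le_nonRCount_cube (k : ℕ) : k ≤ nonRCount (k ^ 3) := by
  induction k with
  | zero => simp [nonRCount]
  | succ k ih =>
    have hcube : k ^ 3 ≤ (k + 1) ^ 3 - 1 := by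
      have : k ^ 3 < (k + 1) ^ 3 := Nat.pow_lt_pow_left (by omega) (by norm_num)
      omega
    have hpos : 0 < (k + 1) ^ 3 := by positivity
    have hstep := nonRCount_succ ((k + 1) ^ 3 - 1)
    rw [Nat.sub_add_cancel hpos, if_neg (not_inR_succ_cube k)] at hstep
    have := nonRCount_monotone hcube
    omega

lemma exists_not_inR_nonRCount_eq (j : ℕ) : ∃ n, ¬ inR n ∧ nonRCount n = j + 1 := by
  have hex : ∃ n, j + 1 ≤ nonRCount n := ⟨(j + 1) ^ 3, le_nonRCount_cube _⟩
  obtain ⟨m, hm⟩ : ∃ m, Nat.find hex = m + 1 :=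
    Nat.exists_eq_succ_of_ne_zero fun h0 => by
      have := Nat.find_spec hex
      rw [h0] at this
      simp [nonRCount] at this
  have hlt : nonRCount m < j + 1 := not_le.mp (Nat.find_min hex (by omega))
  have hge := Nat.find_spec hex
  rw [hm, nonRCount_succ] at hge
  refine ⟨m + 1, fun hR => ?_, ?_⟩
  · rw [if_pos hR] at hge; omega
  · rw [nonRCount_succ]; split_ifs at hge ⊢ <;> omega

lemma psiN_apply_of_not_inR (x y : ℕ → ℕ) {i : ℕ} (h : ¬ inR (i + 1)) :
    psiN x y i = x (nonRCount (i + 1) - 1) := by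
  simp only [psiN, if_neg h]
  rfl

lemma eq_of_psiN_eq {x x' y y' : ℕ → ℕ} (h : psiN x y = psiN x' y') : x = x' := by
  funext j
  obtain ⟨n, hn, hcount⟩ := exists_not_inR_nonRCount_eq j
  obtain ⟨i, rfl⟩ : ∃ i, n = i + 1 :=
    Nat.exists_eq_succ_of_ne_zero (by rintro rfl; simp [nonRCount] at hcount)
  simpa [psiN_apply_of_not_inR _ _ hn, hcount] using congrFun h i

lemma deltaN_injective (N : ℕ) : Function.Injective (deltaN N) :=
  fun _ _ h => eq_of_psiN_eq h

lemma gN_congr (N : ℕ) {x y : ℕ → ℕ} {m : ℕ} (h : ∀ j ≤ m, x j = y j) :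
    gN N x m = gN N y m := by
  unfold gN
  simp only
  split_ifs
  · rfl
  · rfl
  · exact h _ (by omega)

lemma thetaN_congr {x y : ℕ → ℕ} {j : ℕ} (h : ∀ i ≤ j, x i = y i) :
    thetaN x j = thetaN y j :=
  h _ (Nat.sub_le _ _)

lemma psiN_congr {x x' y y' : ℕ → ℕ} {i : ℕ} (hx : ∀ j ≤ i, x j = x' j)
    (hy : ∀ j ≤ i, y j = y' j) : psiN x y i = psiN x' y' i := by
  have := tcount_le (i + 1)
  unfold psiN
  simp only
  split_ifs with hR
  · have := tcount_pos_of_inR hR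
    exact hy _ (by omega)
  · exact hx _ (by omega)

lemma deltaN_congr (N : ℕ) {x y : ℕ → ℕ} {i : ℕ} (h : ∀ j ≤ i, x j = y j) :
    deltaN N x i = deltaN N y i :=
  psiN_congr h fun _ hj => thetaN_congr fun _ hk =>
    gN_congr N fun _ hl => h _ (by omega)

lemma dseq_le_of_congr {F : (ℕ → ℕ) → ℕ → ℕ}
    (hF : ∀ {x y : ℕ → ℕ} {i : ℕ}, (∀ j ≤ i, x j = y j) → F x i = F y i) (x y : ℕ → ℕ) :
    dseq (F x) (F y) ≤ dseq x y := by
  unfold dseq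
  split_ifs with hFxy hxy
  · refine pow_le_pow_of_le_one (by norm_num) (by norm_num) ?_
    by_contra! hlt
    refine Nat.find_spec hFxy (hF fun j hj => ?_)
    exact not_not.mp (Nat.find_min hxy (hj.trans_lt hlt))
  · obtain ⟨j, hj⟩ := hFxy
    exact absurd (hF fun k _ => not_not.mp (not_exists.mp hxy k)) hj
  all_goals positivity

theorem deltaN_continuous_injective_general (N : ℕ) :
    Set.InjOn (deltaN N) (SigmaN N) ∧
    ∀ x ∈ SigmaN N, ∀ ε > (0:ℝ), ∃ δ > (0:ℝ), ∀ y ∈ SigmaN N,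
      dseq x y < δ → dseq (deltaN N x) (deltaN N y) < ε :=
  ⟨(deltaN_injective N).injOn, fun x _ ε hε =>
    ⟨ε, hε, fun y _ hxy => (dseq_le_of_congr (deltaN_congr N) x y).trans_lt hxy⟩⟩

/-- `Δ_N : Σ_N → Σ_N` is continuous and injective. -/
theorem deltaN_continuous_injective (N : ℕ) (hN : 2 ≤ N) :
    Set.InjOn (deltaN N) (SigmaN N) ∧
    ∀ x ∈ SigmaN N, ∀ ε > (0:ℝ), ∃ δ > (0:ℝ), ∀ y ∈ SigmaN N,
      dseq x y < δ → dseq (deltaN N x) (deltaN N y) < ε :=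
  deltaN_continuous_injective_general N
end

section
/- Let b = [b_1,b_2,...] and c = [c_1,c_2,...] be distinct irrationals in [0,1) whose partial quotients are all at most N, with b_i = c_i for i ≤ n and b_{n+1} ≠ c_{n+1}. Then |b - c| ≥ λ^{-2} |I(N+1)|^2 |I(b_1,...,b_n)|, where λ is the quasi-multiplicativity constant of cylinder lengths and I(·) denotes continued fraction cylinders with |·| Lebesgue measure. -/
open MeasureTheory Filter Set

/-! On the cylinder `I(w)`, `T^|w|` is inverted by `invBranch w : t ↦ 1/(w₁ + 1/(⋯ + 1/(wₙ + t)))`,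
a composition of antitone maps and hence monotone or antitone on `[0,1]`. With `w` the common
prefix, `b` and `c` are the images of `s = Tⁿ b` and `t = Tⁿ c`. Say `b_{n+1} < c_{n+1} = a'` and
`c_{n+2} = m ≤ N`. Every point with first digits `a', N+1` then lies between `t` and `s`, so
`I(w a' (N+1)) ⊆ [b, c]`. Quasi-multiplicativity bounds `|I(w a' (N+1))|` below by
`λ⁻² |I(w)| |I(a')| |I(N+1)|`, and `|I(a')| ≥ |I(N+1)|` because `a' ≤ N`. -/

namespace CFSeparation

lemma gaussMap_eq_fract (x : ℝ) : gaussMap x = Int.fract (1 / x) := by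
  unfold gaussMap
  split_ifs with hx
  · simp [hx]
  · exact Int.self_sub_floor _

lemma gaussMap_mem_Ico (x : ℝ) : gaussMap x ∈ Ico 0 1 := by
  rw [gaussMap_eq_fract]
  exact ⟨Int.fract_nonneg _, Int.fract_lt_one _⟩

lemma iterate_gaussMap_mem_Ico {x : ℝ} (hx : x ∈ Ico 0 1) (n : ℕ) : gaussMap^[n] x ∈ Ico 0 1 :=
  MapsTo.iterate (fun y _ => gaussMap_mem_Ico y) n hx

lemma irrational_gaussMap {x : ℝ} (hx : Irrational x) : Irrational (gaussMap x) := by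
  rw [gaussMap_eq_fract, ← Int.self_sub_floor, one_div]
  exact hx.inv.sub_intCast _

lemma pquot_add (x : ℝ) (i k : ℕ) : pquot x (i + k) = pquot (gaussMap^[k] x) i := by
  simp only [pquot, Function.iterate_add_apply]

lemma mem_cyl_append {u v : List ℕ} {x : ℝ} :
    x ∈ cyl (u ++ v) ↔ x ∈ cyl u ∧ gaussMap^[u.length] x ∈ cyl v := by
  simp only [cyl, mem_ofPred_eq, List.length_append]
  constructor
  · rintro ⟨hx, h⟩
    refine ⟨⟨hx, fun i hi => ?_⟩, iterate_gaussMap_mem_Ico hx _, fun i hi => ?_⟩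
    · rw [h i (by omega), List.getD_append _ _ _ _ hi]
    · rw [← pquot_add, h _ (by omega), List.getD_append_right _ _ _ _ (by omega),
        Nat.add_sub_cancel]
  · rintro ⟨⟨hx, hu⟩, -, hv⟩
    refine ⟨hx, fun i hi => ?_⟩
    rcases lt_or_ge i u.length with hiu | hiu
    · rw [hu i hiu, List.getD_append _ _ _ _ hiu]
    · obtain ⟨j, rfl⟩ := Nat.exists_eq_add_of_le' hiu
      rw [pquot_add, hv j (by omega), List.getD_append_right _ _ _ _ hiu, Nat.add_sub_cancel]

lemma mem_cyl_singleton {x : ℝ} {k : ℕ} : x ∈ cyl [k] ↔ x ∈ Ico 0 1 ∧ pquot x 0 = k := by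
  simp [cyl]

lemma iterate_gaussMap_mem_cyl_singleton {x : ℝ} (hx : x ∈ Ico 0 1) (n : ℕ) :
    gaussMap^[n] x ∈ cyl [pquot x n] := by
  rw [mem_cyl_singleton, ← pquot_add, Nat.zero_add]
  exact ⟨iterate_gaussMap_mem_Ico hx n, rfl⟩

lemma iterate_gaussMap_mem_cyl_pair {x : ℝ} (hx : x ∈ Ico 0 1) (n : ℕ) :
    gaussMap^[n] x ∈ cyl [pquot x n, pquot x (n + 1)] := by
  rw [← List.singleton_append, mem_cyl_append, List.length_singleton,
    ← Function.iterate_add_apply, Nat.add_comm 1 n]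
  exact ⟨iterate_gaussMap_mem_cyl_singleton hx n, iterate_gaussMap_mem_cyl_singleton hx (n + 1)⟩

lemma mem_cyl_ofFn {x : ℝ} (hx : x ∈ Ico 0 1) (n : ℕ) :
    x ∈ cyl (List.ofFn fun i : Fin n => pquot x i) :=
  ⟨hx, fun i hi => by simp_all⟩

lemma one_le_pquot {x : ℝ} (hx : x ∈ Ico 0 1) (hirr : Irrational x) (i : ℕ) :
    1 ≤ pquot x i := by
  have hirr' : Irrational (gaussMap^[i] x) := by
    induction i with
    | zero => exact hirr
    | succ i ih => rw [Function.iterate_succ_apply']; exact irrational_gaussMap ih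
  obtain ⟨h0, h1⟩ := iterate_gaussMap_mem_Ico hx i
  have hpos : 0 < gaussMap^[i] x := lt_of_le_of_ne h0 hirr'.ne_zero.symm
  have : (1 : ℤ) ≤ ⌊1 / gaussMap^[i] x⌋ := by
    rw [Int.le_floor, Int.cast_one, le_div_iff₀ hpos, one_mul]
    exact h1.le
  unfold pquot
  omega

lemma mem_cyl_singleton_iff_floor {x : ℝ} {k : ℕ} (hk : 1 ≤ k) :
    x ∈ cyl [k] ↔ 0 < x ∧ x < 1 ∧ ⌊1 / x⌋ = k := by
  rw [mem_cyl_singleton]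
  simp only [pquot, Function.iterate_zero_apply, mem_Ico]
  constructor
  · rintro ⟨⟨hx0, hx1⟩, hfloor⟩
    have hfloor' : ⌊1 / x⌋ = k := by omega
    refine ⟨lt_of_le_of_ne hx0 fun h => ?_, hx1, hfloor'⟩
    simp only [← h, div_zero, Int.floor_zero] at hfloor'
    omega
  · rintro ⟨hx0, hx1, hfloor⟩
    exact ⟨⟨hx0.le, hx1⟩, by rw [hfloor, Int.toNat_natCast]⟩

lemma mem_Ioc_of_mem_cyl_singleton {x : ℝ} {k : ℕ} (hk : 1 ≤ k) (hx : x ∈ cyl [k]) :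
    x ∈ Ioc (1 / ((k : ℝ) + 1)) (1 / k) := by
  obtain ⟨hx0, -, hfloor⟩ := (mem_cyl_singleton_iff_floor hk).1 hx
  obtain ⟨hle, hlt⟩ := Int.floor_eq_iff.1 hfloor
  push_cast at hle hlt
  have hk0 : (0 : ℝ) < k := by exact_mod_cast hk
  exact ⟨(one_div_lt (by positivity) hx0).2 hlt, (le_one_div hx0 hk0).2 hle⟩

lemma Ioo_subset_cyl_singleton {k : ℕ} (hk : 1 ≤ k) :
    Ioo (1 / ((k : ℝ) + 1)) (1 / k) ⊆ cyl [k] := by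
  rintro x ⟨hlo, hhi⟩
  have hk1 : (1 : ℝ) ≤ k := by exact_mod_cast hk
  have hk0 : (0 : ℝ) < k := by positivity
  have hx0 : 0 < x := lt_trans (by positivity) hlo
  refine (mem_cyl_singleton_iff_floor hk).2 ⟨hx0, hhi.trans_le (div_le_one_of_le₀ hk1 hk0.le), ?_⟩
  rw [Int.floor_eq_iff]
  push_cast
  exact ⟨(le_one_div hx0 hk0).1 hhi.le, (one_div_lt hx0 (by positivity : (0 : ℝ) < k + 1)).2 hlo⟩

lemma eq_one_div_add_gaussMap {x : ℝ} {k : ℕ} (hk : 1 ≤ k) (hx : x ∈ cyl [k]) :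
    x = 1 / (k + gaussMap x) := by
  obtain ⟨hx0, -, hfloor⟩ := (mem_cyl_singleton_iff_floor hk).1 hx
  rw [gaussMap, if_neg hx0.ne', hfloor]
  simp

lemma lt_of_mem_cyl_singleton {x y : ℝ} {j k : ℕ} (hj : 1 ≤ j) (hjk : j < k)
    (hx : x ∈ cyl [j]) (hy : y ∈ cyl [k]) : y < x := by
  have hj' : ((j : ℝ) + 1) ≤ k := by exact_mod_cast hjk
  calc y ≤ 1 / k := (mem_Ioc_of_mem_cyl_singleton (by omega) hy).2
    _ ≤ 1 / (j + 1) := one_div_le_one_div_of_le (by positivity) hj'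
    _ < x := (mem_Ioc_of_mem_cyl_singleton hj hx).1

noncomputable def cylLen (w : List ℕ) : ℝ := (volume (cyl w)).toReal

lemma cylLen_singleton {k : ℕ} (hk : 1 ≤ k) : cylLen [k] = 1 / (k * (k + 1)) := by
  have hk0 : (0 : ℝ) < k := by exact_mod_cast hk
  have hvol : volume (cyl [k]) = ENNReal.ofReal (1 / k - 1 / (k + 1)) := by
    apply le_antisymm
    · rw [← Real.volume_Icc]
      exact measure_mono fun x hx => Ioc_subset_Icc_self (mem_Ioc_of_mem_cyl_singleton hk hx)
    · rw [← Real.volume_Ioo]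
      exact measure_mono (Ioo_subset_cyl_singleton hk)
  rw [cylLen, hvol, ENNReal.toReal_ofReal (by rw [sub_nonneg]; gcongr; linarith)]
  field_simp
  ring

lemma cylLen_singleton_antitone {j k : ℕ} (hj : 1 ≤ j) (hjk : j ≤ k) : cylLen [k] ≤ cylLen [j] := by
  rw [cylLen_singleton hj, cylLen_singleton (hj.trans hjk)]
  have hj0 : (0 : ℝ) < j := by exact_mod_cast hj
  have hjk' : (j : ℝ) ≤ k := by exact_mod_cast hjk
  gcongr

noncomputable def invBranch : List ℕ → ℝ → ℝ
  | [], t => t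
  | d :: w, t => 1 / (d + invBranch w t)

lemma antitoneOn_one_div_add {d : ℝ} (hd : 0 < d) : AntitoneOn (fun u => 1 / (d + u)) (Ici 0) :=
  fun _ hu _ _ huv => one_div_le_one_div_of_le (add_pos_of_pos_of_nonneg hd hu) (by linarith)

lemma mapsTo_invBranch {w : List ℕ} (hw : ∀ a ∈ w, 1 ≤ a) :
    MapsTo (invBranch w) (Icc 0 1) (Icc 0 1) := by
  induction w with
  | nil => exact mapsTo_id _
  | cons d w ih =>
    intro t ht
    have hd : (1 : ℝ) ≤ d := by exact_mod_cast hw d List.mem_cons_self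
    have h0 := (ih (fun a ha => hw a (List.mem_cons_of_mem _ ha)) ht).1
    simp only [invBranch]
    exact ⟨by positivity, div_le_one_of_le₀ (by linarith) (by positivity)⟩

lemma invBranch_monotoneOn_or_antitoneOn {w : List ℕ} (hw : ∀ a ∈ w, 1 ≤ a) :
    MonotoneOn (invBranch w) (Icc 0 1) ∨ AntitoneOn (invBranch w) (Icc 0 1) := by
  induction w with
  | nil => exact Or.inl monotoneOn_id
  | cons d w ih =>
    have hw' : ∀ a ∈ w, 1 ≤ a := fun a ha => hw a (List.mem_cons_of_mem _ ha)
    have hd : (0 : ℝ) < d := by exact_mod_cast hw d List.mem_cons_self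
    have hmaps : MapsTo (invBranch w) (Icc 0 1) (Ici 0) := fun t ht => (mapsTo_invBranch hw' ht).1
    rcases ih hw' with h | h
    · exact Or.inr ((antitoneOn_one_div_add hd).comp_MonotoneOn h hmaps)
    · exact Or.inl ((antitoneOn_one_div_add hd).comp h hmaps)

lemma invBranch_mem_uIcc {w : List ℕ} (hw : ∀ a ∈ w, 1 ≤ a) {r s t : ℝ} (ht : t ∈ Icc 0 1)
    (hs : s ∈ Icc 0 1) (hr : r ∈ uIcc t s) :
    invBranch w r ∈ uIcc (invBranch w t) (invBranch w s) := by
  have hsub := uIcc_subset_Icc ht hs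
  rcases invBranch_monotoneOn_or_antitoneOn hw with h | h
  · exact (h.mono hsub).mapsTo_uIcc hr
  · exact (h.mono hsub).mapsTo_uIcc hr

lemma eq_invBranch_of_mem_cyl {w : List ℕ} (hw : ∀ a ∈ w, 1 ≤ a) {x : ℝ} (hx : x ∈ cyl w) :
    x = invBranch w (gaussMap^[w.length] x) := by
  induction w generalizing x with
  | nil => rfl
  | cons d w ih =>
    rw [← List.singleton_append, mem_cyl_append, List.length_singleton,
      Function.iterate_one] at hx
    have hTx := ih (fun a ha => hw a (List.mem_cons_of_mem _ ha)) hx.2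
    calc x = 1 / (d + gaussMap x) := eq_one_div_add_gaussMap (hw d List.mem_cons_self) hx.1
      _ = invBranch (d :: w) (gaussMap^[(d :: w).length] x) := by
        rw [List.length_cons, Function.iterate_succ_apply, invBranch, ← hTx]

lemma cyl_subset_uIcc_invBranch {w : List ℕ} (hw : ∀ a ∈ w, 1 ≤ a) {a a' m N : ℕ} (ha : 1 ≤ a)
    (haa' : a < a') (hm : 1 ≤ m) (hmN : m ≤ N) {s t : ℝ} (hs : s ∈ cyl [a])
    (ht : t ∈ cyl [a', m]) :
    cyl (w ++ [a', N + 1]) ⊆ uIcc (invBranch w t) (invBranch w s) := by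
  intro y hy
  obtain ⟨hyw, hr⟩ := mem_cyl_append.1 hy
  rw [eq_invBranch_of_mem_cyl hw hyw]
  set r := gaussMap^[w.length] y
  rw [← List.singleton_append, mem_cyl_append, List.length_singleton, Function.iterate_one]
    at hr ht
  have ha' : 1 ≤ a' := by omega
  have hrs : r ≤ s := (lt_of_mem_cyl_singleton ha haa' hs hr.1).le
  have htr : t ≤ r := by
    have hTr : gaussMap r < gaussMap t := lt_of_mem_cyl_singleton hm (by omega) ht.2 hr.2
    have ha'0 : (0 : ℝ) < a' := by exact_mod_cast ha'
    rw [eq_one_div_add_gaussMap ha' ht.1, eq_one_div_add_gaussMap ha' hr.1]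
    exact antitoneOn_one_div_add ha'0 (gaussMap_mem_Ico r).1 (gaussMap_mem_Ico t).1 hTr.le
  exact invBranch_mem_uIcc hw (Ico_subset_Icc_self ht.1.1) (Ico_subset_Icc_self hs.1)
    (Icc_subset_uIcc ⟨htr, hrs⟩)

lemma cylLen_le_abs_sub_invBranch {w : List ℕ} (hw : ∀ a ∈ w, 1 ≤ a) {a a' m N : ℕ}
    (ha : 1 ≤ a) (haa' : a < a') (hm : 1 ≤ m) (hmN : m ≤ N) {s t : ℝ} (hs : s ∈ cyl [a])
    (ht : t ∈ cyl [a', m]) :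
    cylLen (w ++ [a', N + 1]) ≤ |invBranch w s - invBranch w t| := by
  have hsub := cyl_subset_uIcc_invBranch hw ha haa' hm hmN hs ht
  rw [cylLen, ← ENNReal.toReal_ofReal (abs_nonneg _), ← Real.volume_interval]
  exact ENNReal.toReal_mono (by simp [Real.volume_interval]) (measure_mono hsub)

lemma sq_mul_cylLen_le_cylLen_append {l : ℝ} (hl : 0 ≤ l)
    (hquasi : ∀ u v : List ℕ, (∀ a ∈ u, 1 ≤ a) → (∀ a ∈ v, 1 ≤ a) →
      l⁻¹ * cylLen u * cylLen v ≤ cylLen (u ++ v))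
    {w : List ℕ} (hw : ∀ a ∈ w, 1 ≤ a) {j k : ℕ} (hj : 1 ≤ j) (hjk : j ≤ k) :
    l⁻¹ ^ 2 * cylLen [k] ^ 2 * cylLen w ≤ cylLen (w ++ [j, k]) := by
  have hk : 1 ≤ k := hj.trans hjk
  have hnonneg : ∀ u, 0 ≤ cylLen u := fun _ => ENNReal.toReal_nonneg
  have hjk' : ∀ a ∈ [j, k], 1 ≤ a := by simp [hj, hk]
  calc l⁻¹ ^ 2 * cylLen [k] ^ 2 * cylLen w
      = l⁻¹ * cylLen w * (l⁻¹ * cylLen [k] * cylLen [k]) := by ring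
    _ ≤ l⁻¹ * cylLen w * (l⁻¹ * cylLen [j] * cylLen [k]) := by
      have := hnonneg w; have := hnonneg [k]
      gcongr
      exact cylLen_singleton_antitone hj hjk
    _ ≤ l⁻¹ * cylLen w * cylLen [j, k] := by
      have := hnonneg w
      gcongr
      exact hquasi [j] [k] (by simpa using hj) (by simpa using hk)
    _ ≤ cylLen (w ++ [j, k]) := hquasi w [j, k] hw hjk'

lemma le_abs_sub_invBranch {l : ℝ} (hl : 0 ≤ l)
    (hquasi : ∀ u v : List ℕ, (∀ a ∈ u, 1 ≤ a) → (∀ a ∈ v, 1 ≤ a) →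
      l⁻¹ * cylLen u * cylLen v ≤ cylLen (u ++ v))
    {w : List ℕ} (hw : ∀ a ∈ w, 1 ≤ a) {a a' m N : ℕ} (ha : 1 ≤ a) (haa' : a < a')
    (ha'N : a' ≤ N) (hm : 1 ≤ m) (hmN : m ≤ N) {s t : ℝ} (hs : s ∈ cyl [a])
    (ht : t ∈ cyl [a', m]) :
    l⁻¹ ^ 2 * cylLen [N + 1] ^ 2 * cylLen w ≤ |invBranch w s - invBranch w t| :=
  (sq_mul_cylLen_le_cylLen_append hl hquasi hw (by omega) (by omega)).trans
    (cylLen_le_abs_sub_invBranch hw ha haa' hm hmN hs ht)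

end CFSeparation

open CFSeparation in
theorem cf_separation_general (N : ℕ) (l : ℝ) (hl1 : 1 ≤ l)
    (hquasi : ∀ u v : List ℕ, (∀ a ∈ u, 1 ≤ a) → (∀ a ∈ v, 1 ≤ a) →
      l⁻¹ * (volume (cyl u)).toReal * (volume (cyl v)).toReal
          ≤ (volume (cyl (u ++ v))).toReal ∧
      (volume (cyl (u ++ v))).toReal
          ≤ l * (volume (cyl u)).toReal * (volume (cyl v)).toReal)
    (b c : ℝ) (hb : b ∈ Set.Ico (0:ℝ) 1) (hc : c ∈ Set.Ico (0:ℝ) 1)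
    (hbi : Irrational b) (hci : Irrational c)
    (hbN : ∀ i, pquot b i ≤ N) (hcN : ∀ i, pquot c i ≤ N)
    (n : ℕ) (hagree : ∀ i < n, pquot b i = pquot c i)
    (hdiff : pquot b n ≠ pquot c n) :
    l⁻¹ ^ 2 * (volume (cyl [N+1])).toReal ^ 2 *
      (volume (cyl (List.ofFn fun i : Fin n => pquot b i))).toReal ≤ |b - c| := by
  set w := List.ofFn fun i : Fin n => pquot b i
  have hw : ∀ a ∈ w, 1 ≤ a := by
    simpa [w, List.mem_ofFn] using fun i : Fin n => one_le_pquot hb hbi i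
  have hcw : w = List.ofFn fun i : Fin n => pquot c i :=
    congrArg List.ofFn (funext fun i => hagree i i.2)
  have hb' := eq_invBranch_of_mem_cyl hw (mem_cyl_ofFn hb n)
  have hc' := eq_invBranch_of_mem_cyl hw (hcw ▸ mem_cyl_ofFn hc n)
  have hquasi' := fun u v hu hv => (hquasi u v hu hv).1
  have hl : 0 ≤ l := zero_le_one.trans hl1
  rw [List.length_ofFn] at hb' hc'
  rw [hb', hc']
  rcases hdiff.lt_or_gt with hlt | hgt
  · exact le_abs_sub_invBranch hl hquasi' hw (one_le_pquot hb hbi n) hlt (hcN n)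
      (one_le_pquot hc hci _) (hcN _) (iterate_gaussMap_mem_cyl_singleton hb n)
      (iterate_gaussMap_mem_cyl_pair hc n)
  · rw [abs_sub_comm]
    exact le_abs_sub_invBranch hl hquasi' hw (one_le_pquot hc hci n) hgt (hbN n)
      (one_le_pquot hb hbi _) (hbN _) (iterate_gaussMap_mem_cyl_singleton hc n)
      (iterate_gaussMap_mem_cyl_pair hb n)

/-- Separation of points with partial quotients at most `N`:
`|b - c| ≥ λ⁻² |I(N+1)|² |I(b_1,…,b_n)|`. -/
theorem cf_separation (N : ℕ) (hN : 2 ≤ N) (l : ℝ) (hl1 : 1 ≤ l)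
    (hquasi : ∀ u v : List ℕ, (∀ a ∈ u, 1 ≤ a) → (∀ a ∈ v, 1 ≤ a) →
      l⁻¹ * (volume (cyl u)).toReal * (volume (cyl v)).toReal
          ≤ (volume (cyl (u ++ v))).toReal ∧
      (volume (cyl (u ++ v))).toReal
          ≤ l * (volume (cyl u)).toReal * (volume (cyl v)).toReal)
    (b c : ℝ) (hb : b ∈ Set.Ico (0:ℝ) 1) (hc : c ∈ Set.Ico (0:ℝ) 1)
    (hbi : Irrational b) (hci : Irrational c) (hbc : b ≠ c)
    (hbN : ∀ i, pquot b i ≤ N) (hcN : ∀ i, pquot c i ≤ N)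
    (n : ℕ) (hagree : ∀ i < n, pquot b i = pquot c i)
    (hdiff : pquot b n ≠ pquot c n) :
    l⁻¹ ^ 2 * (volume (cyl [N+1])).toReal ^ 2 *
      (volume (cyl (List.ofFn fun i : Fin n => pquot b i))).toReal ≤ |b - c| :=
  cf_separation_general N l hl1 hquasi b c hb hc hbi hci hbN hcN n hagree hdiff
end
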